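/- Let (Ω, ℱ, ℙ) be a probability space and X : ℝ → Ω → ℝ. Fix θ₀ ∈ ℝ and assume: (i) for ℙ-almost every ω, the map θ ↦ X θ ω is differentiable at θ₀ with derivative X'(θ₀, ω); (ii) there exist an integrable function K : Ω → ℝ and a neighborhood U of θ₀ such that |X θ ω − X θ' ω| ≤ K(ω)|θ − θ'| for all θ, θ' ∈ U and a.e. ω; (iii) ℙ(X θ₀ = 0) = 0; (iv) for each θ ∈ U, (X θ)⁺ is integrable. Then the function θ ↦ E[(X θ)⁺] is differentiable at θ₀ with derivative E[1_{X θ₀ ≥ 0} · X'(θ₀)] = ∫_{{ω : X θ₀ ω ≥ 0}} X'(θ₀, ω) dℙ(ω). (Differentiation through the Lipschitz function f(x) = x·1_{x ≥ 0} = x⁺ under the expectation.) -/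

import Mathlib

/-!
Since `X θ₀ ≠ 0` almost surely, `x ↦ x⁺` is differentiable at `X θ₀ ω` for a.e. `ω`, with
derivative `1_{X θ₀ ω ≥ 0}`; and since `x ↦ x⁺` is 1-Lipschitz, `θ ↦ (X θ ω)⁺` inherits the
integrable Lipschitz bound `K`. Differentiation under the integral sign (dominated convergence)
then applies; the only subtle point is that the derivative is a.e.-measurable, being an a.e.
limit of difference quotients.
-/

open MeasureTheory Filter Topology

theorem HasDerivAt.max_zero {f : ℝ → ℝ} {f' x : ℝ} (hf : HasDerivAt f f' x) (hx : f x ≠ 0) :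
    HasDerivAt (fun y => max (f y) 0) (if 0 ≤ f x then f' else 0) x := by
  rcases hx.lt_or_gt with hneg | hpos
  · rw [if_neg hneg.not_ge]
    refine (hasDerivAt_const x 0).congr_of_eventuallyEq ?_
    filter_upwards [hf.continuousAt.eventually (gt_mem_nhds hneg)] with y hy
    exact max_eq_right hy.le
  · rw [if_pos hpos.le]
    refine hf.congr_of_eventuallyEq ?_
    filter_upwards [hf.continuousAt.eventually (lt_mem_nhds hpos)] with y hy
    exact max_eq_left hy.le

theorem aestronglyMeasurable_of_hasDerivAt_ae {𝕜 Ω E : Type*} [NontriviallyNormedField 𝕜]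
    [NormedAddCommGroup E] [NormedSpace 𝕜 E] [MeasurableSpace Ω] {μ : Measure Ω}
    {F : 𝕜 → Ω → E} {F' : Ω → E} {x₀ : 𝕜}
    (hF : ∀ᶠ x in 𝓝 x₀, AEStronglyMeasurable (F x) μ)
    (hF' : ∀ᵐ ω ∂μ, HasDerivAt (F · ω) (F' ω) x₀) :
    AEStronglyMeasurable F' μ := by
  obtain ⟨x, hx, hxF⟩ := exists_seq_forall_of_frequently
    (hF.filter_mono (nhdsWithin_le_nhds (s := {x₀}ᶜ))).frequently
  refine aestronglyMeasurable_of_tendsto_ae atTop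
    (f := fun n ω => slope (F · ω) x₀ (x n)) (fun n => ?_) ?_
  · simp only [slope_def_module]
    exact ((hxF n).sub hF.self_of_nhds).const_smul _
  · filter_upwards [hF'] with ω hω
    exact (hasDerivAt_iff_tendsto_slope.1 hω).comp hx

theorem nullMeasurableSet_setOf_nonneg {Ω : Type*} [MeasurableSpace Ω] {μ : Measure Ω}
    {g : Ω → ℝ} (hg : AEMeasurable (fun ω => max (g ω) 0) μ) (hg₀ : μ {ω | g ω = 0} = 0) :
    NullMeasurableSet {ω | 0 ≤ g ω} μ := by
  have : {ω | 0 ≤ g ω} = {ω | 0 < max (g ω) 0} ∪ {ω | g ω = 0} := by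
    ext ω
    simp only [Set.mem_ofPred_eq, Set.mem_union, lt_max_iff, lt_self_iff_false, or_false]
    exact le_iff_lt_or_eq.trans (or_congr_right eq_comm)
  rw [this]
  exact (nullMeasurableSet_lt aemeasurable_const hg).union (NullMeasurableSet.of_null hg₀)

theorem hasDerivAt_integral_posPart_general
    {Ω : Type*} [MeasurableSpace Ω] (ℙ : Measure Ω)
    (X : ℝ → Ω → ℝ) (θ₀ : ℝ) (X' : Ω → ℝ) (K : Ω → ℝ) (U : Set ℝ)
    (hderiv : ∀ᵐ ω ∂ℙ, HasDerivAt (fun θ => X θ ω) (X' ω) θ₀)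
    (hK : Integrable K ℙ) (hU : U ∈ nhds θ₀)
    (hlip : ∀ᵐ ω ∂ℙ, ∀ θ ∈ U, ∀ θ' ∈ U, |X θ ω - X θ' ω| ≤ K ω * |θ - θ'|)
    (hzero : ℙ {ω | X θ₀ ω = 0} = 0)
    (hint : ∀ θ ∈ U, Integrable (fun ω => max (X θ ω) 0) ℙ) :
    HasDerivAt (fun θ => ∫ ω, max (X θ ω) 0 ∂ℙ)
      (∫ ω in {ω | X θ₀ ω ≥ 0}, X' ω ∂ℙ) θ₀ := by
  have hint₀ := hint θ₀ (mem_of_mem_nhds hU)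
  have hmeas : ∀ᶠ θ in 𝓝 θ₀, AEStronglyMeasurable (fun ω => max (X θ ω) 0) ℙ :=
    eventually_of_mem hU fun θ hθ => (hint θ hθ).aestronglyMeasurable
  have hderiv_pos : ∀ᵐ ω ∂ℙ,
      HasDerivAt (fun θ => max (X θ ω) 0) ({ω | X θ₀ ω ≥ 0}.indicator X' ω) θ₀ := by
    filter_upwards [hderiv, measure_eq_zero_iff_ae_notMem.1 hzero] with ω hω hω₀
    simpa [Set.indicator_apply] using hω.max_zero hω₀
  have hlip_pos : ∀ᵐ ω ∂ℙ,
      LipschitzOnWith (Real.nnabs (K ω)) (fun θ => max (X θ ω) 0) U := by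
    filter_upwards [hlip] with ω hω
    have hX : LipschitzOnWith (Real.nnabs (K ω)) (X · ω) U :=
      LipschitzOnWith.of_dist_le_mul fun θ hθ θ' hθ' => by
        simpa [Real.dist_eq] using (hω θ hθ θ' hθ').trans (by gcongr; exact le_abs_self _)
    simpa only [one_mul, Function.comp_def, id] using
      (LipschitzWith.id.max_const 0).comp_lipschitzOnWith hX
  rw [← integral_indicator₀ (nullMeasurableSet_setOf_nonneg hint₀.aemeasurable hzero)]
  exact (hasDerivAt_integral_of_dominated_loc_of_lip hU hmeas hint₀
    (aestronglyMeasurable_of_hasDerivAt_ae hmeas hderiv_pos) hlip_pos hK hderiv_pos).2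

/-- **Differentiating the expected positive part.**
If `θ ↦ X θ ω` is a.s. differentiable at `θ₀` with derivative `X' ω`, is a.s.
Lipschitz near `θ₀` with integrable constant `K`, `ℙ(X θ₀ = 0) = 0`, and
`(X θ)⁺` is integrable for `θ` in the given neighborhood, then
`θ ↦ E[(X θ)⁺]` is differentiable at `θ₀` with derivative
`∫_{X θ₀ ≥ 0} X' dℙ = E[1_{X θ₀ ≥ 0} · X' θ₀]`. -/
theorem hasDerivAt_integral_posPart
    {Ω : Type*} [MeasurableSpace Ω] (ℙ : Measure Ω) [IsProbabilityMeasure ℙ]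
    (X : ℝ → Ω → ℝ) (θ₀ : ℝ) (X' : Ω → ℝ) (K : Ω → ℝ) (U : Set ℝ)
    (hderiv : ∀ᵐ ω ∂ℙ, HasDerivAt (fun θ => X θ ω) (X' ω) θ₀)
    (hK : Integrable K ℙ) (hU : U ∈ nhds θ₀)
    (hlip : ∀ᵐ ω ∂ℙ, ∀ θ ∈ U, ∀ θ' ∈ U, |X θ ω - X θ' ω| ≤ K ω * |θ - θ'|)
    (hzero : ℙ {ω | X θ₀ ω = 0} = 0)
    (hint : ∀ θ ∈ U, Integrable (fun ω => max (X θ ω) 0) ℙ) :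
    HasDerivAt (fun θ => ∫ ω, max (X θ ω) 0 ∂ℙ)
      (∫ ω in {ω | X θ₀ ω ≥ 0}, X' ω ∂ℙ) θ₀ :=
  hasDerivAt_integral_posPart_general ℙ X θ₀ X' K U hderiv hK hU hlip hzero hint
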